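/- For 0 ≤ k ≤ n, B^fmaj_{n,n-k}(q) = Σ_{ℓ=0}^{k} q^{(n-k)(2ℓ-n-k)} · B_{n,n-ℓ}(q) · qbinom(n-ℓ, k-ℓ)_{q^2}. -/
import Mathlib


open Finset LaurentPolynomial

/-- `[m]_q = 1 + q + ... + q^{m-1}`. -/
def qnat {R : Type*} [CommRing R] (q : R) (m : ℕ) : R := ∑ i ∈ Finset.range m, q ^ i

/-- The Gaussian binomial coefficient, as a polynomial expression in `q`. -/
def qbin {R : Type*} [CommRing R] (q : R) : ℕ → ℕ → R
  | 0, 0 => 1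
  | 0, _ + 1 => 0
  | _ + 1, 0 => 1
  | n + 1, k + 1 => qbin q n k + q ^ (k + 1) * qbin q n (k + 1)

/-- A signed permutation of `{1,...,n}`, encoded as an (unsigned) permutation together
with a sign for each position. -/
abbrev SignedPerm (n : ℕ) := Equiv.Perm (Fin n) × (Fin n → Bool)

/-- The value `π_i ∈ {±1,...,±n}` (1-indexed) of a signed permutation; `π_0 = 0`. -/
def spVal {n : ℕ} (π : SignedPerm n) (i : ℕ) : ℤ :=
  if h : 1 ≤ i ∧ i ≤ n then
    (if π.2 ⟨i - 1, by omega⟩ then -(((π.1 ⟨i - 1, by omega⟩ : Fin n) : ℤ) + 1)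
     else ((π.1 ⟨i - 1, by omega⟩ : Fin n) : ℤ) + 1)
  else 0

/-- The type B descent set `Des_B(π) = {i ∈ {0,...,n-1} : π_i > π_{i+1}}` (with `π_0 = 0`). -/
def desSetB {n : ℕ} (π : SignedPerm n) : Finset ℕ :=
  (Finset.range n).filter fun i => spVal π (i + 1) < spVal π i

/-- `neg(π)`, the number of negative entries of a signed permutation. -/
def negB {n : ℕ} (π : SignedPerm n) : ℕ :=
  ((Finset.range n).filter fun i => spVal π (i + 1) < 0).card

/-- The flag-major index `fmaj(π) = 2 Σ_{i ∈ Des_B(π)} i + neg(π)`. -/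
def fmajB {n : ℕ} (π : SignedPerm n) : ℕ := 2 * ∑ i ∈ desSetB π, i + negB π

/-- The statistic `fmaj(π,S) = fmaj(π) - Σ_{j ∈ S} (2 |Des_B(π) ∩ {j,...,n-1}| - 1)`
of a descent-starred signed permutation (as an integer). -/
def fmajStar {n : ℕ} (π : SignedPerm n) (S : Finset ℕ) : ℤ :=
  (fmajB π : ℤ) - ∑ j ∈ S, (2 * (((desSetB π).filter fun t => j ≤ t).card : ℤ) - 1)

/-- `B^fmaj_{n,k}(q) = Σ_{(π,S), S ⊆ Des_B(π), |S| = k} q^{fmaj(π,S)}`,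
as a Laurent polynomial in `q`. -/
noncomputable def BfmajPoly (n k : ℕ) : LaurentPolynomial ℤ :=
  ∑ π : SignedPerm n, ∑ S ∈ (desSetB π).powersetCard k, T (fmajStar π S)

/-- The type B q-Eulerian number `B_{n,m}(q) = Σ_{des_B(π)=m} q^{fmaj(π)}`,
as a Laurent polynomial in `q`. -/
noncomputable def qEulerB (n m : ℕ) : LaurentPolynomial ℤ :=
  ∑ π ∈ Finset.univ.filter fun π : SignedPerm n => (desSetB π).card = m,
    T (fmajB π : ℤ)

section qbinlemmas
variable {R : Type*} [CommRing R] (q : R)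

lemma qbin_zero_right : ∀ n, qbin q n 0 = 1
  | 0 => rfl
  | _ + 1 => rfl

lemma qbin_eq_zero : ∀ {n k : ℕ}, n < k → qbin q n k = 0
  | 0, _ + 1, _ => rfl
  | n + 1, k + 1, h => by
    rw [qbin, qbin_eq_zero (show n < k by omega), qbin_eq_zero (show n < k + 1 by omega)]
    ring

lemma qbin_self : ∀ n, qbin q n n = 1
  | 0 => rfl
  | n + 1 => by rw [qbin, qbin_self n, qbin_eq_zero q (by omega)]; ring

lemma qbin_one_right : ∀ n, q * qbin q n 1 + 1 = qbin q n 1 + q ^ n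
  | 0 => by rw [qbin_eq_zero q (by omega)]; ring
  | n + 1 => by
    have := qbin_one_right n
    rw [show qbin q (n+1) 1 = qbin q n 0 + q ^ 1 * qbin q n 1 from rfl, qbin_zero_right]
    ring_nf
    ring_nf at this
    linear_combination q * this

lemma qbin_pascal' : ∀ (n k : ℕ), qbin q (n + 1) (k + 1) = q ^ (n - k) * qbin q n k + qbin q n (k + 1)
  | 0, 0 => by norm_num [qbin, qbin_zero_right]
  | 0, k + 1 => by
    rw [qbin, qbin_eq_zero q (by omega), qbin_eq_zero q (by omega)]
    ring
  | n + 1, 0 => by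
    have := qbin_one_right q (n + 1)
    rw [show qbin q (n+2) 1 = qbin q (n+1) 0 + q ^ 1 * qbin q (n+1) 1 from rfl, qbin_zero_right]
    norm_num
    linear_combination this
  | n + 1, k + 1 => by
    rcases lt_trichotomy k n with hk | hk | hk
    · have d2 : qbin q (n+1+1) (k+1+1) = qbin q (n+1) (k+1) + q ^ (k+1+1) * qbin q (n+1) (k+1+1) := rfl
      have d1 : qbin q (n+1) (k+1) = qbin q n k + q ^ (k+1) * qbin q n (k+1) := rfl
      have d1' : qbin q (n+1) (k+1+1) = qbin q n (k+1) + q ^ (k+1+1) * qbin q n (k+1+1) := rfl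
      have p1 := qbin_pascal' n k
      have p2 := qbin_pascal' n (k+1)
      rw [show n - k = (n - (k+1)) + 1 by omega] at p1
      rw [show n + 1 - (k + 1) = (n - (k+1)) + 1 by omega]
      linear_combination d2 + p1 + q^(k+1+1) * p2 - q^((n-(k+1))+1) * d1 - d1'
    · subst hk
      rw [qbin_self, qbin_self, qbin_eq_zero q (by omega), Nat.sub_self]
      ring
    · rw [qbin, qbin_eq_zero q (show n + 1 < k + 2 by omega), show n + 1 - (k + 1) = 0 by omega]
      ring

lemma qbin_symm : ∀ (n k : ℕ), k ≤ n → qbin q n k = qbin q n (n - k)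
  | 0, 0, _ => rfl
  | n + 1, 0, _ => by rw [qbin_zero_right, Nat.sub_zero, qbin_self]
  | n + 1, k + 1, h => by
    rcases eq_or_lt_of_le h with h' | h'
    · rw [← h', qbin_self, Nat.sub_self, qbin_zero_right]
    · have hk : k + 1 ≤ n := by omega
      rw [qbin, show n + 1 - (k + 1) = (n - k - 1) + 1 by omega, qbin_pascal',
        show n - (n - k - 1) = k + 1 by omega, show n - k - 1 + 1 = n - k by omega,
        show n - k - 1 = n - (k + 1) by omega, ← qbin_symm n (k + 1) hk,
        ← qbin_symm n k (by omega)]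
      ring

end qbinlemmas

lemma sumW : ∀ (m : ℕ) (D : Finset ℕ), D.card = m → ∀ j : ℕ,
    ∑ S ∈ D.powersetCard j, (T (-(∑ t ∈ S, (2 * ((D.filter fun s => t ≤ s).card : ℤ) - 1))) : LaurentPolynomial ℤ)
    = T (-(j:ℤ)^2 - 2*(j:ℤ)*((m:ℤ) - (j:ℤ))) * qbin (T 2 : LaurentPolynomial ℤ) m j := by
  intro m
  induction m with
  | zero =>
    intro D hD j
    rw [Finset.card_eq_zero] at hD
    subst hD
    cases j with
    | zero => norm_num [Finset.powersetCard_zero, qbin_zero_right, T_zero]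
    | succ jj =>
      rw [Finset.powersetCard_eq_empty.mpr (by simp), Finset.sum_empty,
        qbin_eq_zero _ (by omega)]
      ring
  | succ m ih =>
    intro D hD j
    have hne : D.Nonempty := by rw [← Finset.card_pos, hD]; omega
    set a := D.min' hne with ha
    have haD : a ∈ D := D.min'_mem hne
    have hins : insert a (D.erase a) = D := Finset.insert_erase haD
    have hanotin : a ∉ D.erase a := Finset.notMem_erase a D
    have hcard : (D.erase a).card = m := by rw [Finset.card_erase_of_mem haD, hD]; omega
    have hw : ∀ t ∈ D.erase a, (D.filter fun s => t ≤ s) = ((D.erase a).filter fun s => t ≤ s) := by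
      intro t ht
      have hat : a < t :=
        lt_of_le_of_ne (D.min'_le t (Finset.mem_of_mem_erase ht))
          (Ne.symm (Finset.ne_of_mem_erase ht))
      conv_lhs => rw [← hins]
      rw [Finset.filter_insert, if_neg (by omega)]
    have hwa : (D.filter fun s => a ≤ s) = D :=
      Finset.filter_true_of_mem (fun s hs => D.min'_le s hs)
    cases j with
    | zero => norm_num [Finset.powersetCard_zero, qbin_zero_right, T_zero]
    | succ jj =>
      have hdisj : Disjoint ((D.erase a).powersetCard (jj+1))
          (Finset.image (insert a) ((D.erase a).powersetCard jj)) := by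
        rw [Finset.disjoint_right]
        intro S hS hS'
        obtain ⟨S', hS'mem, rfl⟩ := Finset.mem_image.mp hS
        exact hanotin ((Finset.mem_powersetCard.mp hS').1 (Finset.mem_insert_self a S'))
      have hsplit : D.powersetCard (jj+1) =
          (D.erase a).powersetCard (jj+1) ∪
            Finset.image (insert a) ((D.erase a).powersetCard jj) := by
        conv_lhs => rw [← hins]
        exact Finset.powersetCard_succ_insert hanotin jj
      rw [hsplit, Finset.sum_union hdisj]
      have hinj : ∀ S₁ ∈ (D.erase a).powersetCard jj, ∀ S₂ ∈ (D.erase a).powersetCard jj,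
          insert a S₁ = insert a S₂ → S₁ = S₂ := by
        intro S₁ h₁ S₂ h₂ heq
        have na₁ : a ∉ S₁ := fun hmem => hanotin ((Finset.mem_powersetCard.mp h₁).1 hmem)
        have na₂ : a ∉ S₂ := fun hmem => hanotin ((Finset.mem_powersetCard.mp h₂).1 hmem)
        rw [← Finset.erase_insert na₁, ← Finset.erase_insert na₂, heq]
      have himg : ∑ S ∈ Finset.image (insert a) ((D.erase a).powersetCard jj),
            (T (-(∑ t ∈ S, (2 * ((D.filter fun s => t ≤ s).card : ℤ) - 1))) : LaurentPolynomial ℤ)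
          = ∑ S ∈ (D.erase a).powersetCard jj,
            (T (-(∑ t ∈ insert a S, (2 * ((D.filter fun s => t ≤ s).card : ℤ) - 1))) : LaurentPolynomial ℤ) :=
        Finset.sum_image hinj
      rw [himg]
      have h1 : ∑ S ∈ (D.erase a).powersetCard (jj+1),
            (T (-(∑ t ∈ S, (2 * ((D.filter fun s => t ≤ s).card : ℤ) - 1))) : LaurentPolynomial ℤ)
          = ∑ S ∈ (D.erase a).powersetCard (jj+1),
            (T (-(∑ t ∈ S, (2 * (((D.erase a).filter fun s => t ≤ s).card : ℤ) - 1))) : LaurentPolynomial ℤ) := by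
        apply Finset.sum_congr rfl
        intro S hS
        have hSsub := (Finset.mem_powersetCard.mp hS).1
        congr 1
        congr 1
        exact Finset.sum_congr rfl fun t ht => by rw [hw t (hSsub ht)]
      have h2 : ∑ S ∈ (D.erase a).powersetCard jj,
            (T (-(∑ t ∈ insert a S, (2 * ((D.filter fun s => t ≤ s).card : ℤ) - 1))) : LaurentPolynomial ℤ)
          = T (-(2 * ((m:ℤ)+1) - 1)) * ∑ S ∈ (D.erase a).powersetCard jj,
            (T (-(∑ t ∈ S, (2 * (((D.erase a).filter fun s => t ≤ s).card : ℤ) - 1))) : LaurentPolynomial ℤ) := by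
        rw [Finset.mul_sum]
        apply Finset.sum_congr rfl
        intro S hS
        have hSsub := (Finset.mem_powersetCard.mp hS).1
        have naS : a ∉ S := fun hmem => hanotin (hSsub hmem)
        have hsum : (∑ t ∈ S, (2 * ((D.filter fun s => t ≤ s).card : ℤ) - 1))
            = ∑ t ∈ S, (2 * (((D.erase a).filter fun s => t ≤ s).card : ℤ) - 1) :=
          Finset.sum_congr rfl fun t ht => by rw [hw t (hSsub ht)]
        rw [Finset.sum_insert naS, hsum, hwa, hD, neg_add, T_add]
        congr 2
      rw [h1, h2, ih (D.erase a) hcard (jj+1), ih (D.erase a) hcard jj]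
      rw [show qbin (T 2 : LaurentPolynomial ℤ) (m+1) (jj+1)
          = qbin (T 2) m jj + (T 2)^(jj+1) * qbin (T 2) m (jj+1) from rfl, T_pow]
      have hA : (T (-(((jj+1:ℕ)):ℤ)^2 - 2*((jj+1:ℕ):ℤ)*(((m+1:ℕ):ℤ) - ((jj+1:ℕ):ℤ)))
            * T (((jj+1:ℕ):ℤ) * 2) : LaurentPolynomial ℤ)
          = T (-((jj+1:ℕ):ℤ)^2 - 2*((jj+1:ℕ):ℤ)*((m:ℤ) - ((jj+1:ℕ):ℤ))) := by
        rw [← T_add]; congr 1; push_cast; ring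
      have hB : (T (-(((jj+1:ℕ)):ℤ)^2 - 2*((jj+1:ℕ):ℤ)*(((m+1:ℕ):ℤ) - ((jj+1:ℕ):ℤ))) : LaurentPolynomial ℤ)
          = T (-(2 * ((m:ℤ)+1) - 1)) * T (-(jj:ℤ)^2 - 2*(jj:ℤ)*((m:ℤ) - (jj:ℤ))) := by
        rw [← T_add]; congr 1; push_cast; ring
      linear_combination (-qbin (T 2 : LaurentPolynomial ℤ) m (jj+1)) * hA
        - (qbin (T 2 : LaurentPolynomial ℤ) m jj) * hB

lemma desSetB_card_le {n : ℕ} (π : SignedPerm n) : (desSetB π).card ≤ n := by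
  have := Finset.card_filter_le (Finset.range n) fun i => spVal π (i + 1) < spVal π i
  simpa [desSetB] using this

theorem stmt11 (n k : ℕ) (h : k ≤ n) :
    BfmajPoly n (n - k) =
      ∑ ℓ ∈ Finset.range (k + 1),
        T (((n : ℤ) - k) * (2 * (ℓ : ℤ) - n - k)) * qEulerB n (n - ℓ) *
          qbin (T 2 : LaurentPolynomial ℤ) (n - ℓ) (k - ℓ) := by
  have step1 : BfmajPoly n (n - k)
      = ∑ π : SignedPerm n, T ((fmajB π : ℤ))
          * (T (-((n-k : ℕ):ℤ)^2 - 2*((n-k:ℕ):ℤ)*(((desSetB π).card : ℤ) - ((n-k:ℕ):ℤ)))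
             * qbin (T 2 : LaurentPolynomial ℤ) (desSetB π).card (n-k)) := by
    unfold BfmajPoly
    apply Finset.sum_congr rfl
    intro π _
    rw [← sumW (desSetB π).card (desSetB π) rfl (n-k), Finset.mul_sum]
    apply Finset.sum_congr rfl
    intro S hS
    rw [← T_add, show fmajStar π S = (fmajB π : ℤ)
      + -∑ t ∈ S, (2 * (((desSetB π).filter fun s => t ≤ s).card : ℤ) - 1) by
        unfold fmajStar; ring]
  rw [step1]
  rw [← Finset.sum_fiberwise_of_maps_to
      (g := fun π : SignedPerm n => (desSetB π).card) (t := Finset.range (n+1))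
      (fun π _ => Finset.mem_range.mpr (Nat.lt_succ_of_le (desSetB_card_le π))) _]
  have step2 : ∀ m ∈ Finset.range (n+1),
      (∑ π ∈ Finset.univ.filter (fun π : SignedPerm n => (desSetB π).card = m),
        T ((fmajB π : ℤ))
          * (T (-((n-k : ℕ):ℤ)^2 - 2*((n-k:ℕ):ℤ)*(((desSetB π).card : ℤ) - ((n-k:ℕ):ℤ)))
             * qbin (T 2 : LaurentPolynomial ℤ) (desSetB π).card (n-k)))
      = T (-((n-k:ℕ):ℤ)^2 - 2*((n-k:ℕ):ℤ)*((m:ℤ) - ((n-k:ℕ):ℤ))) * qEulerB n m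
          * qbin (T 2 : LaurentPolynomial ℤ) m (n-k) := by
    intro m _
    have hc : ∀ π ∈ Finset.univ.filter (fun π : SignedPerm n => (desSetB π).card = m),
        T ((fmajB π : ℤ))
          * (T (-((n-k : ℕ):ℤ)^2 - 2*((n-k:ℕ):ℤ)*(((desSetB π).card : ℤ) - ((n-k:ℕ):ℤ)))
             * qbin (T 2 : LaurentPolynomial ℤ) (desSetB π).card (n-k))
        = T ((fmajB π : ℤ))
          * (T (-((n-k : ℕ):ℤ)^2 - 2*((n-k:ℕ):ℤ)*((m : ℤ) - ((n-k:ℕ):ℤ)))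
             * qbin (T 2 : LaurentPolynomial ℤ) m (n-k)) := by
      intro π hπ
      rw [(Finset.mem_filter.mp hπ).2]
    rw [Finset.sum_congr rfl hc, ← Finset.sum_mul, qEulerB]
    ring
  rw [Finset.sum_congr rfl step2]
  rw [← Finset.sum_subset (show Finset.Icc (n-k) n ⊆ Finset.range (n+1) by
        intro x hx; rw [Finset.mem_range]; rw [Finset.mem_Icc] at hx; omega)
      (by
        intro x hx hx'
        rw [Finset.mem_range] at hx
        rw [Finset.mem_Icc] at hx'
        rw [qbin_eq_zero _ (show x < n - k by omega), mul_zero])]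
  apply Finset.sum_nbij' (i := fun m => n - m) (j := fun ℓ => n - ℓ)
  · intro m hm; rw [Finset.mem_Icc] at hm; rw [Finset.mem_range]; omega
  · intro ℓ hℓ; rw [Finset.mem_range] at hℓ; rw [Finset.mem_Icc]; omega
  · intro m hm; rw [Finset.mem_Icc] at hm; omega
  · intro ℓ hℓ; rw [Finset.mem_range] at hℓ; omega
  · intro m hm
    rw [Finset.mem_Icc] at hm
    rw [show n - (n - m) = m by omega, show k - (n - m) = m - (n - k) by omega,
      ← qbin_symm _ m (n-k) (by omega)]
    have hT : (T (-((n-k:ℕ):ℤ)^2 - 2*((n-k:ℕ):ℤ)*((m:ℤ) - ((n-k:ℕ):ℤ))) : LaurentPolynomial ℤ)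
        = T (((n : ℤ) - k) * (2 * ((n-m : ℕ) : ℤ) - n - k)) := by
      congr 1
      rw [Nat.cast_sub h, Nat.cast_sub (by omega : m ≤ n)]
      ring
    rw [hT]
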